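/- If G ⊆ 2^{[n]} is 2-wise t-intersecting and 0 < p ≤ 1/2, then μ_p(G) ≤ (p/q)^t, where q = 1 − p. -/

import Mathlib

open Finset

/-- p-biased measure of a family on ground set of size `n` (= `[n]`). -/
def mu (p : ℝ) (n : ℕ) (G : Finset (Finset ℕ)) : ℝ :=
  ∑ A ∈ G, p ^ A.card * (1 - p) ^ (n - A.card)

/-- p-biased measure of a family on an arbitrary finite ground set `X`. -/
def muOn (p : ℝ) (X : Finset ℕ) (G : Finset (Finset ℕ)) : ℝ :=
  ∑ A ∈ G, p ^ A.card * (1 - p) ^ (X.card - A.card)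

/-- `F_0^t = {F ⊆ [n] : [t] ⊆ F}`. -/
def F0 (n t : ℕ) : Finset (Finset ℕ) :=
  (Finset.Icc 1 n).powerset.filter (fun F => Finset.Icc 1 t ⊆ F)

/-- `F_1^t = {F ⊆ [n] : |F ∩ [t+3]| ≥ t+2}`. -/
def F1 (n t : ℕ) : Finset (Finset ℕ) :=
  (Finset.Icc 1 n).powerset.filter (fun F => t + 2 ≤ (F ∩ Finset.Icc 1 (t + 3)).card)

/-- `F_2^t = {F ⊆ [n] : |F ∩ [t+6]| ≥ t+4}`. -/
def F2 (n t : ℕ) : Finset (Finset ℕ) :=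
  (Finset.Icc 1 n).powerset.filter (fun F => t + 4 ≤ (F ∩ Finset.Icc 1 (t + 6)).card)

/-- `p_0(t) = 2/(√(4t+9) − 1)`. -/
noncomputable def p0 (t : ℕ) : ℝ := 2 / (Real.sqrt (4 * t + 9) - 1)

/-- The family is `r`-wise `t`-intersecting: any `r` members (with repetition)
intersect in at least `t` elements. -/
def RWise (r t : ℕ) (G : Finset (Finset ℕ)) : Prop :=
  ∀ f : Fin r → Finset ℕ, (∀ k, f k ∈ G) → t ≤ (⋂ k, (f k : Set ℕ)).ncard

/-- The shift `s_{i,j}` of a single set `A`, relative to the family `G`. -/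
def shiftSet (i j : ℕ) (G : Finset (Finset ℕ)) (A : Finset ℕ) : Finset ℕ :=
  if A ∩ {i, j} = {j} ∧ (A.erase j ∪ {i}) ∉ G then A.erase j ∪ {i} else A

/-- The shifting operation `σ_{i,j}` applied to a family. -/
def shift (i j : ℕ) (G : Finset (Finset ℕ)) : Finset (Finset ℕ) :=
  G.image (shiftSet i j G)

/-- `G` and `H` are isomorphic as families on ground set `[n]`:
`H` is the image of `G` under a permutation preserving `[n]`. -/
def Iso (n : ℕ) (G H : Finset (Finset ℕ)) : Prop :=
  ∃ τ : Equiv.Perm ℕ, (∀ x, x ∈ Finset.Icc 1 n ↔ τ x ∈ Finset.Icc 1 n) ∧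
    H = G.image (fun A => A.image τ)

/-- `G` is `(3,t)`-maximal on `[n]`. -/
def Max3 (n t : ℕ) (G : Finset (Finset ℕ)) : Prop :=
  (∀ A ∈ G, A ⊆ Finset.Icc 1 n) ∧ RWise 3 t G ∧
    ∀ F : Finset ℕ, F ⊆ Finset.Icc 1 n → F ∉ G → ¬ RWise 3 t (insert F G)

/-- `G` is shifted on `[n]`. -/
def Shifted (n : ℕ) (G : Finset (Finset ℕ)) : Prop :=
  ∀ i j : ℕ, 1 ≤ i → i < j → j ≤ n → shift i j G = G

/-- One shifting step. -/
def ShiftStep (n : ℕ) (G H : Finset (Finset ℕ)) : Prop :=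
  ∃ i j : ℕ, 1 ≤ i ∧ i ≤ n ∧ 1 ≤ j ∧ j ≤ n ∧ H = shift i j G


/-!
Shifting `j` down to `i < j` (whenever the shifted set is new) preserves the `p`-measure and
`t`-intersection and strictly decreases `∑ A ∈ G, ∑ x ∈ A, x`, so `G` may be assumed shifted.
Read a set `A ⊆ [n]` as a walk that steps up at the points of `A` and down at the other points
of `[n]`. In a shifted `t`-intersecting family every member reaches height `t`: otherwise the
points of `A` beyond its first `t - 1` can be pushed one by one into gaps of `A`, staying in the
family, until a member meeting `A` in only `t - 1` points appears. Finally, by first-step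
analysis the `p`-biased walk reaches height `t` with probability at most `r ^ t`, `r = p / q`,
since `q * r ^ (t + 1) + p * r ^ (t - 1) = r ^ t`.
-/

open Equiv

def IsTIntersecting (t : ℕ) (G : Finset (Finset ℕ)) : Prop :=
  ∀ A ∈ G, ∀ B ∈ G, t ≤ #(A ∩ B)

lemma isTIntersecting_of_rwise_two {t : ℕ} {G : Finset (Finset ℕ)} (h : RWise 2 t G) :
    IsTIntersecting t G := by
  intro A hA B hB
  have hAB := h ![A, B] (by simp [Fin.forall_fin_two, hA, hB])
  have hinter : ⋂ k, ((![A, B] k : Finset ℕ) : Set ℕ) = ↑(A ∩ B) := by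
    ext x
    simp [Fin.forall_fin_two]
  rwa [hinter, Set.ncard_coe_finset] at hAB

section Shifting

variable {n t i j : ℕ} {G : Finset (Finset ℕ)} {A B : Finset ℕ}

lemma inter_pair_eq_singleton_iff (hij : i ≠ j) : A ∩ {i, j} = {j} ↔ j ∈ A ∧ i ∉ A := by
  simp only [Finset.ext_iff, mem_inter, mem_insert, mem_singleton]
  constructor
  · intro h
    exact ⟨((h j).2 rfl).1, fun hi => hij ((h i).1 ⟨hi, Or.inl rfl⟩)⟩
  · rintro ⟨hj, hi⟩ x
    constructor
    · rintro ⟨hx, rfl | rfl⟩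
      · exact absurd hx hi
      · rfl
    · rintro rfl
      exact ⟨hj, Or.inr rfl⟩

lemma erase_union_singleton_eq_image_swap (hj : j ∈ A) (hi : i ∉ A) :
    A.erase j ∪ {i} = A.image (swap i j) := by
  ext x
  simp only [mem_union, mem_erase, mem_singleton, mem_image, swap_apply_def]
  grind

lemma image_swap_eq_self (h : i ∈ B ↔ j ∈ B) : B.image (swap i j) = B := by
  ext x
  simp only [mem_image, swap_apply_def]
  grind

lemma card_inter_image_swap (s u : Finset ℕ) :
    #(s.image (swap i j) ∩ u.image (swap i j)) = #(s ∩ u) := by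
  rw [← image_inter _ _ (swap i j).injective, card_image_of_injective _ (swap i j).injective]

lemma image_swap_image_swap (s : Finset ℕ) : (s.image (swap i j)).image (swap i j) = s := by
  simp [image_image, Function.comp_def]

lemma shiftSet_eq_image_swap_of_ne (hij : i ≠ j) (h : shiftSet i j G A ≠ A) :
    j ∈ A ∧ i ∉ A ∧ A.image (swap i j) ∉ G ∧ shiftSet i j G A = A.image (swap i j) := by
  unfold shiftSet at h ⊢
  split_ifs at h ⊢ with hmove
  · obtain ⟨hj, hi⟩ := (inter_pair_eq_singleton_iff hij).1 hmove.1
    rw [erase_union_singleton_eq_image_swap hj hi] at hmove ⊢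
    exact ⟨hj, hi, hmove.2, rfl⟩
  · exact absurd rfl h

lemma image_swap_mem_of_shiftSet_eq (hij : i ≠ j) (h : shiftSet i j G A = A) (hj : j ∈ A)
    (hi : i ∉ A) : A.image (swap i j) ∈ G := by
  by_contra hnot
  have hmove : shiftSet i j G A = A.image (swap i j) := by
    rw [shiftSet, erase_union_singleton_eq_image_swap hj hi,
      if_pos ⟨(inter_pair_eq_singleton_iff hij).2 ⟨hj, hi⟩, hnot⟩]
  exact hi (h ▸ hmove ▸ mem_image.2 ⟨j, hj, swap_apply_right i j⟩)

lemma shiftSet_injOn (hij : i ≠ j) : Set.InjOn (shiftSet i j G) G := by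
  intro A hA B hB h
  by_cases hA' : shiftSet i j G A = A <;> by_cases hB' : shiftSet i j G B = B
  · rwa [hA', hB'] at h
  · obtain ⟨-, -, hnot, hmove⟩ := shiftSet_eq_image_swap_of_ne hij hB'
    exact absurd (by rwa [← hmove, ← h, hA']) hnot
  · obtain ⟨-, -, hnot, hmove⟩ := shiftSet_eq_image_swap_of_ne hij hA'
    exact absurd (by rwa [← hmove, h, hB']) hnot
  · rw [(shiftSet_eq_image_swap_of_ne hij hA').2.2.2,
      (shiftSet_eq_image_swap_of_ne hij hB').2.2.2] at h
    exact image_injective (swap i j).injective h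

lemma card_shiftSet (hij : i ≠ j) (A : Finset ℕ) : #(shiftSet i j G A) = #A := by
  by_cases h : shiftSet i j G A = A
  · rw [h]
  · rw [(shiftSet_eq_image_swap_of_ne hij h).2.2.2, card_image_of_injective _ (swap i j).injective]

lemma mu_shift (p : ℝ) (n : ℕ) (hij : i ≠ j) : mu p n (shift i j G) = mu p n G := by
  rw [mu, shift, sum_image (shiftSet_injOn hij)]
  simp only [card_shiftSet hij, mu]

lemma subset_of_mem_shift {X : Finset ℕ} (hij : i ≠ j) (hi : i ∈ X) (hG : ∀ A ∈ G, A ⊆ X) :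
    ∀ A ∈ shift i j G, A ⊆ X := by
  intro _ hX
  obtain ⟨A, hA, rfl⟩ := mem_image.1 hX
  by_cases h : shiftSet i j G A = A
  · rw [h]
    exact hG A hA
  · obtain ⟨hj, hi', -, hmove⟩ := shiftSet_eq_image_swap_of_ne hij h
    rw [hmove, ← erase_union_singleton_eq_image_swap hj hi']
    exact union_subset ((erase_subset j A).trans (hG A hA)) (singleton_subset_iff.2 hi)

lemma IsTIntersecting.le_card_image_swap_inter (hG : IsTIntersecting t G) (hij : i ≠ j)
    (hA : A ∈ G) (hB : B ∈ G) (hiA : i ∉ A) (hBfix : shiftSet i j G B = B) :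
    t ≤ #(A.image (swap i j) ∩ B) := by
  by_cases hjB : j ∈ B
  · by_cases hiB : i ∈ B
    · rw [← image_swap_eq_self (iff_of_true hiB hjB), card_inter_image_swap]
      exact hG A hA B hB
    · -- `B` was not moved although it could be, so its shift is already in `G`
      have hB' := image_swap_mem_of_shiftSet_eq hij hBfix hjB hiB
      rw [← image_swap_image_swap B, card_inter_image_swap]
      exact hG A hA _ hB'
  · calc t ≤ #(A ∩ B) := hG A hA B hB
      _ ≤ #(A.image (swap i j) ∩ B) := by
        refine card_le_card fun x hx => ?_
        obtain ⟨hxA, hxB⟩ := mem_inter.1 hx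
        refine mem_inter.2 ⟨mem_image.2 ⟨x, hxA, ?_⟩, hxB⟩
        exact swap_apply_of_ne_of_ne (fun h => hiA (h ▸ hxA)) (fun h => hjB (h ▸ hxB))

lemma IsTIntersecting.shift (hG : IsTIntersecting t G) (hij : i ≠ j) :
    IsTIntersecting t (shift i j G) := by
  intro _ hX _ hY
  obtain ⟨A, hA, rfl⟩ := mem_image.1 hX
  obtain ⟨B, hB, rfl⟩ := mem_image.1 hY
  by_cases hA' : shiftSet i j G A = A <;> by_cases hB' : shiftSet i j G B = B
  · rw [hA', hB']
    exact hG A hA B hB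
  · obtain ⟨-, hiB, -, hmove⟩ := shiftSet_eq_image_swap_of_ne hij hB'
    rw [hA', hmove, inter_comm]
    exact hG.le_card_image_swap_inter hij hB hA hiB hA'
  · obtain ⟨-, hiA, -, hmove⟩ := shiftSet_eq_image_swap_of_ne hij hA'
    rw [hB', hmove]
    exact hG.le_card_image_swap_inter hij hA hB hiA hB'
  · rw [(shiftSet_eq_image_swap_of_ne hij hA').2.2.2, (shiftSet_eq_image_swap_of_ne hij hB').2.2.2,
      card_inter_image_swap]
    exact hG A hA B hB

def weight (G : Finset (Finset ℕ)) : ℕ := ∑ A ∈ G, ∑ x ∈ A, x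

lemma sum_image_swap_lt (hij : i < j) (hjA : j ∈ A) (hiA : i ∉ A) :
    ∑ x ∈ A.image (swap i j), x < ∑ x ∈ A, x := by
  rw [sum_image (swap i j).injective.injOn]
  refine sum_lt_sum (fun x hx => ?_) ⟨j, hjA, by rw [swap_apply_right]; exact hij⟩
  rw [swap_apply_def]
  split_ifs with hxi hxj
  · exact absurd (hxi ▸ hx) hiA
  · omega
  · exact le_rfl

lemma weight_shift_lt (hij : i < j) (hne : shift i j G ≠ G) :
    weight (shift i j G) < weight G := by
  obtain ⟨A, hA, hmoved⟩ : ∃ A ∈ G, shiftSet i j G A ≠ A := by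
    by_contra! hfix
    exact hne (by rw [shift, image_congr hfix, image_id'])
  rw [weight, weight, shift, sum_image (shiftSet_injOn hij.ne)]
  refine sum_lt_sum (fun B _ => ?_) ⟨A, hA, ?_⟩
  · by_cases hB : shiftSet i j G B = B
    · rw [hB]
    · obtain ⟨hjB, hiB, -, hmove⟩ := shiftSet_eq_image_swap_of_ne hij.ne hB
      exact hmove ▸ (sum_image_swap_lt hij hjB hiB).le
  · obtain ⟨hjA, hiA, -, hmove⟩ := shiftSet_eq_image_swap_of_ne hij.ne hmoved
    exact hmove ▸ sum_image_swap_lt hij hjA hiA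

lemma exists_shifted (p : ℝ) (hG : ∀ A ∈ G, A ⊆ Icc 1 n) (hint : IsTIntersecting t G) :
    ∃ H, (∀ A ∈ H, A ⊆ Icc 1 n) ∧ IsTIntersecting t H ∧ Shifted n H ∧ mu p n H = mu p n G := by
  induction hw : weight G using Nat.strong_induction_on generalizing G with
  | _ w ih =>
    by_cases hsh : Shifted n G
    · exact ⟨G, hG, hint, hsh, rfl⟩
    obtain ⟨i, j, hi, hij, hjn, hne⟩ : ∃ i j, 1 ≤ i ∧ i < j ∧ j ≤ n ∧ shift i j G ≠ G := by
      simpa [Shifted] using hsh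
    obtain ⟨H, hHsub, hHint, hHsh, hmu⟩ := ih _ (hw ▸ weight_shift_lt hij hne)
      (subset_of_mem_shift hij.ne (mem_Icc.2 ⟨hi, by omega⟩) hG) (hint.shift hij.ne) rfl
    exact ⟨H, hHsub, hHint, hHsh, hmu.trans (mu_shift p n hij.ne)⟩

lemma Shifted.erase_union_singleton_mem (hsh : Shifted n G) (hi : 1 ≤ i) (hij : i < j)
    (hjn : j ≤ n) (hB : B ∈ G) (hjB : j ∈ B) (hiB : i ∉ B) : B.erase j ∪ {i} ∈ G := by
  rw [erase_union_singleton_eq_image_swap hjB hiB]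
  by_cases hfix : shiftSet i j G B = B
  · exact image_swap_mem_of_shiftSet_eq hij.ne hfix hjB hiB
  · have hmem : shiftSet i j G B ∈ shift i j G := mem_image_of_mem _ hB
    rwa [hsh i j hi hij hjn, (shiftSet_eq_image_swap_of_ne hij.ne hfix).2.2.2] at hmem

end Shifting

section Walk

variable {n u v j : ℕ} {G : Finset (Finset ℕ)} {A C : Finset ℕ}

/-- `A`, read as a walk on `a + 1, …, a + b` that steps up at the points of `A` and down at the
others, reaches height `t`: after `m` steps its height is `2 * #(A ∩ Icc (a + 1) (a + m)) - m`. -/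
def Hits (a b t : ℕ) (A : Finset ℕ) : Prop :=
  ∃ m ≤ b, m + t ≤ 2 * #(A ∩ Icc (a + 1) (a + m))

instance (a b t : ℕ) : DecidablePred (Hits a b t) := fun _ => by
  unfold Hits
  infer_instance

lemma inter_Icc_of_next (hvj : v < j) (hjA : j ∈ A) (hnext : ∀ x ∈ A, v < x → j ≤ x) :
    A ∩ Icc 1 j = insert j (A ∩ Icc 1 v) := by
  ext x
  simp only [mem_inter, mem_insert, mem_Icc]
  constructor
  · rintro ⟨hxA, hx1, hxj⟩
    by_cases hxv : x ≤ v
    · exact Or.inr ⟨hxA, hx1, hxv⟩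
    · exact Or.inl (le_antisymm hxj (hnext x hxA (by omega)))
  · rintro (rfl | ⟨hxA, hx1, hxv⟩)
    · exact ⟨hjA, by omega, le_rfl⟩
    · exact ⟨hxA, hx1, by omega⟩

lemma card_inter_Icc_of_next (hvj : v < j) (hjA : j ∈ A) (hnext : ∀ x ∈ A, v < x → j ≤ x) :
    #(A ∩ Icc 1 j) = #(A ∩ Icc 1 v) + 1 := by
  rw [inter_Icc_of_next hvj hjA hnext, card_insert_of_notMem]
  simp only [mem_inter, mem_Icc]
  omega

lemma exists_next (h : ∃ x ∈ A, v < x) : ∃ j ∈ A, v < j ∧ ∀ x ∈ A, v < x → j ≤ x :=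
  ⟨Nat.find h, (Nat.find_spec h).1, (Nat.find_spec h).2,
    fun _ hxA hvx => Nat.find_min' h ⟨hxA, hvx⟩⟩

lemma exists_card_inter_Icc_eq (hA : ∀ x ∈ A, 1 ≤ x) :
    ∀ k ≤ #A, ∃ v, #(A ∩ Icc 1 v) = k := by
  intro k
  induction k with
  | zero => exact fun _ => ⟨0, by simp⟩
  | succ k ih =>
    intro hk
    obtain ⟨v, hv⟩ := ih (by omega)
    have habove : ∃ x ∈ A, v < x := by
      by_contra! hbelow
      rw [inter_eq_left.2 fun x hx => mem_Icc.2 ⟨hA x hx, hbelow x hx⟩] at hv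
      omega
    obtain ⟨j, hjA, hvj, hnext⟩ := exists_next habove
    exact ⟨j, by rw [card_inter_Icc_of_next hvj hjA hnext, hv]⟩

/-- Invariant of the walk argument: as `v` runs through `A`, the member `C` of `G` is pushed into
gaps of `A` below `v` while keeping exactly `u` common points with `A` there. -/
def Trails (G : Finset (Finset ℕ)) (A : Finset ℕ) (u v : ℕ) (C : Finset ℕ) : Prop :=
  C ∈ G ∧ (∀ x, v < x → (x ∈ C ↔ x ∈ A)) ∧ #(C ∩ Icc 1 v) ≤ #(A ∩ Icc 1 v) ∧
    #(A ∩ C ∩ Icc 1 v) = u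

lemma Trails.exists_gap (hC : Trails G A u v C) (hvj : v < j) (hnext : ∀ x ∈ A, v < x → j ≤ x)
    (hlow : 2 * (#(A ∩ Icc 1 v) + 1) < j + (u + 1)) : ∃ b, 1 ≤ b ∧ b < j ∧ b ∉ A ∧ b ∉ C := by
  obtain ⟨-, hagree, hle, hcap⟩ := hC
  -- `A ∪ C` has no point in `(v, j)`, and at most `2 * #(A ∩ Icc 1 v) - u < j - 1` up to `v`
  have hunion : #(A ∩ Icc 1 v ∪ C ∩ Icc 1 v) < #(Icc 1 (j - 1)) := by
    have hinter : A ∩ Icc 1 v ∩ (C ∩ Icc 1 v) = A ∩ C ∩ Icc 1 v := by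
      ext x
      simp only [mem_inter]
      tauto
    have := card_union_add_card_inter (A ∩ Icc 1 v) (C ∩ Icc 1 v)
    rw [hinter, hcap] at this
    rw [Nat.card_Icc]
    omega
  obtain ⟨b, hb, hbAC⟩ := exists_mem_notMem_of_card_lt_card hunion
  rw [mem_Icc] at hb
  simp only [mem_union, mem_inter, mem_Icc, not_or, not_and] at hbAC
  have hbA : b ∉ A := fun hbA => by
    by_cases hvb : v < b
    · have := hnext b hbA hvb
      omega
    · have := hbAC.1 hbA hb.1
      omega
  have hbC : b ∉ C := fun hbC => by
    by_cases hvb : v < b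
    · exact hbA ((hagree b hvb).1 hbC)
    · have := hbAC.2 hbC hb.1
      omega
  exact ⟨b, hb.1, by omega, hbA, hbC⟩

lemma erase_union_singleton_inter_Icc {b : ℕ} (hb1 : 1 ≤ b) (hbj : b < j) (hvj : v < j)
    (hbelow : ∀ x ∈ C, x ≠ j → x ≤ j → x ≤ v) :
    (C.erase j ∪ {b}) ∩ Icc 1 j = insert b (C ∩ Icc 1 v) := by
  ext x
  simp only [mem_inter, mem_union, mem_erase, mem_singleton, mem_insert, mem_Icc]
  constructor
  · rintro ⟨⟨hxj, hxC⟩ | rfl, hx1, hxj'⟩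
    · exact Or.inr ⟨hxC, hx1, hbelow x hxC hxj hxj'⟩
    · exact Or.inl rfl
  · rintro (rfl | ⟨hxC, hx1, hxv⟩)
    · exact ⟨Or.inr rfl, hb1, hbj.le⟩
    · exact ⟨Or.inl ⟨by omega, hxC⟩, hx1, by omega⟩

lemma Trails.step (hsh : Shifted n G) (hC : Trails G A u v C) (hjA : j ∈ A) (hjn : j ≤ n)
    (hvj : v < j) (hnext : ∀ x ∈ A, v < x → j ≤ x) (hlow : 2 * #(A ∩ Icc 1 j) < j + (u + 1)) :
    ∃ C', Trails G A u j C' := by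
  have hAj := card_inter_Icc_of_next hvj hjA hnext
  obtain ⟨b, hb1, hbj, hbA, hbC⟩ := hC.exists_gap hvj hnext (hAj ▸ hlow)
  obtain ⟨hCG, hagree, hle, hcap⟩ := hC
  have hjC : j ∈ C := (hagree j hvj).2 hjA
  have hbelow : ∀ x ∈ C, x ≠ j → x ≤ j → x ≤ v := fun x hxC hxj hxj' => by
    by_contra! hvx
    have := hnext x ((hagree x hvx).1 hxC) hvx
    omega
  have hC' := erase_union_singleton_inter_Icc hb1 hbj hvj hbelow
  refine ⟨C.erase j ∪ {b}, hsh.erase_union_singleton_mem hb1 hbj hjn hCG hjC hbC,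
    fun x hjx => ?_, ?_, ?_⟩
  · rw [← hagree x (by omega), mem_union, mem_erase, mem_singleton]
    constructor
    · rintro (⟨-, hxC⟩ | rfl)
      · exact hxC
      · omega
    · exact fun hxC => Or.inl ⟨by omega, hxC⟩
  · rw [hC', card_insert_of_notMem fun h => hbC (mem_inter.1 h).1]
    omega
  · rw [inter_assoc, hC', inter_insert_of_notMem hbA, ← inter_assoc, hcap]

lemma Trails.false {v : ℕ} {C : Finset ℕ} (hsh : Shifted n G)
    (hint : IsTIntersecting (u + 1) G) (hA : A ∈ G) (hAn : A ⊆ Icc 1 n)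
    (hlow : ∀ m ≤ n, 2 * #(A ∩ Icc 1 m) < m + (u + 1)) (hC : Trails G A u v C) : False := by
  by_cases habove : ∃ x ∈ A, v < x
  · obtain ⟨j, hjA, hvj, hnext⟩ := exists_next habove
    have hjn := (mem_Icc.1 (hAn hjA)).2
    obtain ⟨C', hC'⟩ := hC.step hsh hjA hjn hvj hnext (hlow j hjn)
    exact hC'.false hsh hint hA hAn hlow
  · push Not at habove
    obtain ⟨hCG, -, -, hcap⟩ := hC
    rw [inter_eq_left.2 fun x hx => mem_Icc.2 ⟨(mem_Icc.1 (hAn (mem_inter.1 hx).1)).1,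
      habove x (mem_inter.1 hx).1⟩] at hcap
    have := hint A hA C hCG
    omega
termination_by n - v
decreasing_by omega

lemma Shifted.hits {t : ℕ} (hsh : Shifted n G) (hG : ∀ A ∈ G, A ⊆ Icc 1 n)
    (hint : IsTIntersecting t G) (hA : A ∈ G) : Hits 0 n t A := by
  cases t with
  | zero => exact ⟨0, Nat.zero_le n, Nat.zero_le _⟩
  | succ u =>
    by_contra hmiss
    have hlow : ∀ m ≤ n, 2 * #(A ∩ Icc 1 m) < m + (u + 1) := by
      simpa [Hits] using hmiss
    have hAcard : u ≤ #A := by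
      have := hint A hA A hA
      rw [inter_self] at this
      omega
    obtain ⟨v, hv⟩ := exists_card_inter_Icc_eq (fun x hx => (mem_Icc.1 (hG A hA hx)).1) u hAcard
    exact Trails.false (v := v) hsh hint hA (hG A hA) hlow
      ⟨hA, fun _ _ => Iff.rfl, le_rfl, by rwa [inter_self]⟩

end Walk

section Hitting

lemma muOn_powerset (p : ℝ) (X : Finset ℕ) : muOn p X X.powerset = 1 := by
  rw [muOn, sum_pow_mul_eq_add_pow, add_sub_cancel, one_pow]

lemma muOn_mono {p : ℝ} (hp0 : 0 ≤ p) (hp1 : p ≤ 1) {X : Finset ℕ} {F F' : Finset (Finset ℕ)}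
    (h : F ⊆ F') : muOn p X F ≤ muOn p X F' :=
  sum_le_sum_of_subset_of_nonneg h fun _ _ _ => by
    have : 0 ≤ 1 - p := by linarith
    positivity

lemma muOn_filter_powerset_insert (p : ℝ) {x : ℕ} {X : Finset ℕ} (hx : x ∉ X)
    (P : Finset ℕ → Prop) [DecidablePred P] :
    muOn p (insert x X) ((insert x X).powerset.filter P) =
      (1 - p) * muOn p X (X.powerset.filter P) +
        p * muOn p X (X.powerset.filter fun A => P (insert x A)) := by
  simp only [muOn, sum_filter, sum_powerset_insert hx, mul_sum, card_insert_of_notMem hx]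
  congr 1 <;> refine sum_congr rfl fun A hA => ?_ <;> have hAX := mem_powerset.1 hA
  · split_ifs
    · rw [Nat.sub_add_comm (card_le_card hAX), pow_succ]
      ring
    · rw [mul_zero]
  · split_ifs
    · rw [card_insert_of_notMem fun h => hx (hAX h), Nat.add_sub_add_right, pow_succ]
      ring
    · rw [mul_zero]

lemma card_inter_Icc_succ (a m : ℕ) (A : Finset ℕ) :
    #(A ∩ Icc (a + 1) (a + (m + 1))) =
      #(A ∩ Icc (a + 1 + 1) (a + 1 + m)) + if a + 1 ∈ A then 1 else 0 := by
  rw [show a + (m + 1) = a + 1 + m by omega, ← insert_Icc_add_one_left_eq_Icc (by omega)]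
  split_ifs with ha
  · rw [inter_insert_of_mem ha, card_insert_of_notMem fun h => by simp at h]
  · rw [inter_insert_of_notMem ha, add_zero]

lemma hits_succ_iff {a b u : ℕ} {A : Finset ℕ} :
    Hits a (b + 1) (u + 1) A ↔ ∃ m ≤ b, m + u + 2 ≤ 2 * #(A ∩ Icc (a + 1) (a + (m + 1))) := by
  constructor
  · rintro ⟨_ | m, hm, h⟩
    · simp at h
    · exact ⟨m, by omega, by omega⟩
  · rintro ⟨m, hm, h⟩
    exact ⟨m + 1, by omega, by omega⟩

lemma hits_succ_iff_of_notMem {a b u : ℕ} {A : Finset ℕ} (ha : a + 1 ∉ A) :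
    Hits a (b + 1) (u + 1) A ↔ Hits (a + 1) b (u + 2) A := by
  rw [hits_succ_iff, Hits]
  simp only [card_inter_Icc_succ, if_neg ha]
  refine exists_congr fun m => and_congr_right fun _ => ?_
  omega

lemma hits_insert_succ_iff {a b u : ℕ} {A : Finset ℕ} :
    Hits a (b + 1) (u + 1) (insert (a + 1) A) ↔ Hits (a + 1) b u A := by
  rw [hits_succ_iff, Hits]
  simp only [card_inter_Icc_succ, if_pos (mem_insert_self _ _),
    insert_inter_of_notMem (show a + 1 ∉ Icc (a + 1 + 1) _ by simp)]
  refine exists_congr fun m => and_congr_right fun _ => ?_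
  omega

def hitFamily (a b t : ℕ) : Finset (Finset ℕ) :=
  (Icc (a + 1) (a + b)).powerset.filter (Hits a b t)

lemma muOn_hitFamily_succ (p : ℝ) (a b u : ℕ) :
    muOn p (Icc (a + 1) (a + (b + 1))) (hitFamily a (b + 1) (u + 1)) =
      (1 - p) * muOn p (Icc (a + 1 + 1) (a + 1 + b)) (hitFamily (a + 1) b (u + 2)) +
        p * muOn p (Icc (a + 1 + 1) (a + 1 + b)) (hitFamily (a + 1) b u) := by
  have hIcc : Icc (a + 1) (a + (b + 1)) = insert (a + 1) (Icc (a + 1 + 1) (a + 1 + b)) := by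
    rw [show a + (b + 1) = a + 1 + b by omega, insert_Icc_add_one_left_eq_Icc (by omega)]
  have ha : a + 1 ∉ Icc (a + 1 + 1) (a + 1 + b) := by simp
  rw [hitFamily, hIcc, muOn_filter_powerset_insert p ha, hitFamily, hitFamily]
  congr 3 <;> refine filter_congr fun A hA => ?_
  · exact hits_succ_iff_of_notMem fun h => ha (mem_powerset.1 hA h)
  · exact hits_insert_succ_iff

lemma muOn_hitFamily_le {p : ℝ} (hp0 : 0 ≤ p) (hp1 : p < 1) (b a t : ℕ) :
    muOn p (Icc (a + 1) (a + b)) (hitFamily a b t) ≤ (p / (1 - p)) ^ t := by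
  have hq : 0 < 1 - p := by linarith
  have hzero (a b : ℕ) : muOn p (Icc (a + 1) (a + b)) (hitFamily a b 0) ≤ 1 :=
    (muOn_mono hp0 hp1.le (filter_subset _ _)).trans_eq (muOn_powerset p _)
  induction b generalizing a t with
  | zero =>
    obtain _ | u := t
    · simpa using hzero a 0
    · have hempty : hitFamily a 0 (u + 1) = ∅ := by
        refine filter_false_of_mem fun A _ ⟨m, hm, h⟩ => ?_
        obtain rfl : m = 0 := by omega
        simp at h
      rw [hempty, muOn, sum_empty]
      positivity
  | succ b ih =>
    obtain _ | u := t
    · simpa using hzero a (b + 1)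
    · rw [muOn_hitFamily_succ]
      calc _ ≤ (1 - p) * (p / (1 - p)) ^ (u + 2) + p * (p / (1 - p)) ^ u := by
            gcongr
            exacts [ih _ _, ih _ _]
        _ = (p / (1 - p)) ^ (u + 1) := by
            have hr : (1 - p) * (p / (1 - p)) = p := mul_div_cancel₀ p hq.ne'
            linear_combination (p / (1 - p)) ^ u * (p / (1 - p) - 1) * hr

end Hitting

theorem stmt_11 (n t : ℕ) (G : Finset (Finset ℕ)) (hG : ∀ A ∈ G, A ⊆ Finset.Icc 1 n)
    (hint : RWise 2 t G) (p : ℝ) (hp : 0 < p) (hp2 : p ≤ 1 / 2) :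
    mu p n G ≤ (p / (1 - p)) ^ t := by
  have hp1 : p < 1 := by linarith
  obtain ⟨H, hHsub, hHint, hHsh, hmu⟩ := exists_shifted p hG (isTIntersecting_of_rwise_two hint)
  have hHhit : H ⊆ hitFamily 0 n t := fun A hA =>
    mem_filter.2 ⟨mem_powerset.2 (by simpa using hHsub A hA), hHsh.hits hHsub hHint hA⟩
  calc mu p n G = muOn p (Icc (0 + 1) (0 + n)) H := by
        rw [← hmu, mu, muOn, zero_add, zero_add, Nat.card_Icc, Nat.add_sub_cancel]
    _ ≤ muOn p (Icc (0 + 1) (0 + n)) (hitFamily 0 n t) := muOn_mono hp.le hp1.le hHhit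
    _ ≤ (p / (1 - p)) ^ t := muOn_hitFamily_le hp.le hp1 n 0 t
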